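/- arXiv:2111.08549 — 10 statements merged into one kernel-verified Lean document; each statement's English description precedes it below -/
import Mathlib

section
/- Let A be an abelian category with enough projectives and X a resolving subcategory of A. Given a short exact sequence 0 → X → Y → Z → 0 in A, the X-resolution dimensions satisfy: (1) X-res Y ≤ max{X-res X, X-res Z}; (2) X-res X ≤ max{X-res Y, X-res Z − 1}; (3) X-res Z ≤ max{X-res X + 1, X-res Y}. -/
open CategoryTheory CategoryTheory.Limits

attribute [local instance] Abelian.hasFiniteBiproducts

universe v₁ v₂ v₃ u₁ u₂ u₃

/-- A recollement of abelian categories. -/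
structure Recollement (A : Type u₁) (B : Type u₂) (C : Type u₃)
    [Category.{v₁} A] [Category.{v₂} B] [Category.{v₃} C]
    [Abelian A] [Abelian B] [Abelian C] where
  /-- the functor `i^*` -/
  iStar : B ⥤ A
  /-- the functor `i_*` -/
  iLower : A ⥤ B
  /-- the functor `i^!` -/
  iShriek : B ⥤ A
  /-- the functor `j_!` -/
  jLower : C ⥤ B
  /-- the functor `j^*` -/
  jStar : B ⥤ C
  /-- the functor `j_*` -/
  jUpper : C ⥤ B
  adj₁ : iStar ⊣ iLower
  adj₂ : iLower ⊣ iShriek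
  adj₃ : jLower ⊣ jStar
  adj₄ : jStar ⊣ jUpper
  iLower_preservesFiniteLimits : PreservesFiniteLimits iLower
  iLower_preservesFiniteColimits : PreservesFiniteColimits iLower
  jStar_preservesFiniteLimits : PreservesFiniteLimits jStar
  jStar_preservesFiniteColimits : PreservesFiniteColimits jStar
  iStar_preservesFiniteColimits : PreservesFiniteColimits iStar
  iShriek_preservesFiniteLimits : PreservesFiniteLimits iShriek
  jLower_preservesFiniteColimits : PreservesFiniteColimits jLower
  jUpper_preservesFiniteLimits : PreservesFiniteLimits jUpper
  iLower_full : iLower.Full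
  iLower_faithful : iLower.Faithful
  jLower_full : jLower.Full
  jLower_faithful : jLower.Faithful
  jUpper_full : jUpper.Full
  jUpper_faithful : jUpper.Faithful
  im_eq_ker : ∀ b : B, IsZero (jStar.obj b) ↔ ∃ a : A, Nonempty (iLower.obj a ≅ b)

variable {A : Type u₁} [Category.{v₁} A] [Abelian A]

/-- A resolving subcategory: contains the projectives, closed under extensions
and under kernels of epimorphisms (given by short exact sequences). -/
structure IsResolving (X : Set A) : Prop where
  projective_mem : ∀ P : A, Projective P → P ∈ X
  ext_closed : ∀ S : ShortComplex A, S.ShortExact → S.X₁ ∈ X → S.X₃ ∈ X → S.X₂ ∈ X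
  ker_epi_closed : ∀ S : ShortComplex A, S.ShortExact → S.X₂ ∈ X → S.X₃ ∈ X → S.X₁ ∈ X

/-- `ResLE X M n` : there is an exact sequence `0 → X_n → ⋯ → X_0 → M → 0`
with all `X_i ∈ X`. -/
inductive ResLE (X : Set A) : A → ℕ → Prop
  | zero {M X₀ : A} (e : X₀ ≅ M) (hX₀ : X₀ ∈ X) : ResLE X M 0
  | succ {M K X₀ : A} {n : ℕ} (f : K ⟶ X₀) (g : X₀ ⟶ M) (w : f ≫ g = 0)
      (hse : (ShortComplex.mk f g w).ShortExact) (hX₀ : X₀ ∈ X)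
      (hK : ResLE X K n) : ResLE X M (n + 1)

/-- The `X`-resolution dimension of an object `M` (`⊤` if there is no finite
`X`-resolution). -/
noncomputable def resDim (X : Set A) (M : A) : ℕ∞ :=
  sInf {n : ℕ∞ | ∃ m : ℕ, ResLE X M m ∧ n = (m : ℕ∞)}

/-- The `X`-resolution dimension of the whole category. -/
noncomputable def resDimCat (X : Set A) : ℕ∞ :=
  ⨆ M : A, resDim X M

/-- The closure of a class of objects under finite direct sums and direct summands. -/
def addClosure (D : Set A) : Set A :=
  {a | ∃ (n : ℕ) (f : Fin n → A), (∀ i, f i ∈ D) ∧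
    ∃ (s : a ⟶ ⨁ f) (r : ⨁ f ⟶ a), s ≫ r = 𝟙 a}

/-!
Every step is a pullback of a short exact sequence `0 → X₁ → X₂ → X₃ → 0`, either along a map
into `X₃` or along an epimorphism onto `X₂`; the new sequences compare the first step of a
resolution of one term with that of another. In this way (2) and (3) at level `n` follow from
closure under extensions of the objects with `X`-resolution dimension at most `n`, and that
closure is proved by induction on `n`. For the inductive step pull back along a projective cover
`P ↠ X₃`: the pullback `V` is an extension of `P` by `X₁`, which splits, so `V` is also an
extension of `X₁` by `P ∈ X` and has dimension at most `n + 1`; then `X₂` is the quotient of `V`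
by the syzygy of `X₃`, which has dimension at most `n`.
-/

namespace CategoryTheory.ShortComplex

variable {S : ShortComplex A}

lemma ShortExact.of_isPullback (hS : S.ShortExact) {P T : A} {fst : P ⟶ S.X₂} {snd : P ⟶ T}
    {p : T ⟶ S.X₃} (h : IsPullback fst snd S.g p) :
    (ShortComplex.mk (h.lift S.f 0 (by simp)) snd (by simp)).ShortExact := by
  have := hS.mono_f
  have := hS.epi_g
  have : Mono (h.lift S.f 0 (by simp)) := mono_of_mono_fac (h.lift_fst _ _ _)
  have : Epi snd := Abelian.epi_snd_of_isLimit _ _ h.isLimit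
  refine .mk' (ShortComplex.exact_of_f_is_kernel _ <| KernelFork.IsLimit.ofι' _ _ fun t ht => ?_)
    inferInstance inferInstance
  have ht' : (t ≫ fst) ≫ S.g = 0 := by simp [h.w, reassoc_of% ht]
  exact ⟨hS.exact.lift _ ht', h.hom_ext (by simp) (by simpa using ht.symm)⟩

lemma ShortExact.comp_of_isPullback (hS : S.ShortExact) {P Y : A} {fst : P ⟶ Y} {snd : P ⟶ S.X₁}
    {q : Y ⟶ S.X₂} [Epi q] (h : IsPullback fst snd q S.f) :
    (ShortComplex.mk fst (q ≫ S.g) (by simp [reassoc_of% h.w])).ShortExact := by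
  have := hS.mono_f
  have := hS.epi_g
  have : Mono fst := h.mono_fst_of_mono
  refine .mk' (ShortComplex.exact_of_f_is_kernel _ <| KernelFork.IsLimit.ofι' _ _ fun t ht => ?_)
    inferInstance (epi_comp _ _)
  have ht' : (t ≫ q) ≫ S.g = 0 := by simpa using ht
  exact ⟨h.lift t (hS.exact.lift _ ht') (by simp), h.lift_fst _ _ _⟩

lemma Splitting.shortExact_swap (s : S.Splitting) :
    (ShortComplex.mk s.s s.r s.s_r).ShortExact :=
  Splitting.shortExact
    { r := S.g, s := S.f, f_r := s.s_g, s_g := s.f_r, id := (add_comm _ _).trans s.id }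

end CategoryTheory.ShortComplex

namespace ResLE

variable {X : Set A}

open ZeroObject in
lemma add_one (hX : IsResolving X) {M : A} {n : ℕ} (h : ResLE X M n) : ResLE X M (n + 1) := by
  induction h with
  | @zero M X₀ e hX₀ =>
    refine .succ (0 : 0 ⟶ X₀) e.hom zero_comp ?_ hX₀
      (.zero (Iso.refl 0) (hX.projective_mem 0 inferInstance))
    exact (ShortComplex.Splitting.ofIsZeroOfIsIso _ (isZero_zero A)
      (inferInstanceAs (IsIso e.hom))).shortExact
  | succ f g w hse hX₀ _ ih => exact .succ f g w hse hX₀ ih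

lemma mono (hX : IsResolving X) {M : A} {m n : ℕ} (h : ResLE X M m) (hmn : m ≤ n) :
    ResLE X M n :=
  Nat.le_induction h (fun _ _ => add_one hX) n hmn

lemma of_mem (hX : IsResolving X) {M : A} (hM : M ∈ X) (n : ℕ) : ResLE X M n :=
  (ResLE.zero (Iso.refl M) hM).mono hX n.zero_le

end ResLE

section ResolutionDimension

variable {X : Set A} {S : ShortComplex A} {n : ℕ}

lemma resLE_X₁_of_mem_X₃ (hX : IsResolving X) (hS : S.ShortExact) (h₃ : S.X₃ ∈ X)
    (h₂ : ResLE X S.X₂ n) : ResLE X S.X₁ n := by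
  have pullback_mem {Y : A} (q : Y ⟶ S.X₂) [Epi q] (hY : Y ∈ X) : pullback q S.f ∈ X :=
    hX.ker_epi_closed _ (hS.comp_of_isPullback (.of_hasPullback q S.f)) hY h₃
  cases h₂ with
  | zero e hX₀ =>
    have := (IsPullback.of_hasPullback e.hom S.f).isIso_snd_of_isIso
    exact .zero (asIso (pullback.snd e.hom S.f)) (pullback_mem e.hom hX₀)
  | succ f g w hse hX₀ hK =>
    have := hse.epi_g
    exact .succ _ _ _ (hse.of_isPullback (.of_hasPullback g S.f)) (pullback_mem g hX₀) hK

lemma resLE_X₂_of_mem_X₁ (hX : IsResolving X) (hS : S.ShortExact) (h₁ : S.X₁ ∈ X)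
    (h₃ : ResLE X S.X₃ n) : ResLE X S.X₂ n := by
  have pullback_mem {Y : A} (q : Y ⟶ S.X₃) (hY : Y ∈ X) : pullback S.g q ∈ X :=
    hX.ext_closed _ (hS.of_isPullback (.of_hasPullback S.g q)) h₁ hY
  cases h₃ with
  | zero e hX₀ =>
    have := (IsPullback.of_hasPullback S.g e.hom).isIso_fst_of_isIso
    exact .zero (asIso (pullback.fst S.g e.hom)) (pullback_mem e.hom hX₀)
  | succ f g w hse hX₀ hK =>
    exact .succ _ _ _ (hse.of_isPullback (IsPullback.of_hasPullback S.g g).flip)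
      (pullback_mem g hX₀) hK

lemma resLE_X₁_of_resLE_succ_X₃ (hX : IsResolving X)
    [ObjectProperty.IsClosedUnderExtensions (ResLE X · n)] (hS : S.ShortExact)
    (h₂ : ResLE X S.X₂ n) (h₃ : ResLE X S.X₃ (n + 1)) : ResLE X S.X₁ n := by
  cases h₃ with
  | succ l p w hse hX₀ hL =>
    have h := IsPullback.of_hasPullback S.g p
    have hV : ResLE X (pullback S.g p) n :=
      ObjectProperty.prop_X₂_of_shortExact (ResLE X · n) (hse.of_isPullback h.flip) hL h₂
    exact (resLE_X₁_of_mem_X₃ hX (hS.of_isPullback h) hX₀ hV :)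

lemma resLE_succ_X₃_of_resLE_X₁ [ObjectProperty.IsClosedUnderExtensions (ResLE X · n)]
    (hS : S.ShortExact) (h₁ : ResLE X S.X₁ n) (h₂ : ResLE X S.X₂ (n + 1)) :
    ResLE X S.X₃ (n + 1) := by
  cases h₂ with
  | succ u q w hse hY₀ hW =>
    have := hse.epi_g
    have h := IsPullback.of_hasPullback q S.f
    exact .succ _ _ _ (hS.comp_of_isPullback h) hY₀
      (ObjectProperty.prop_X₂_of_shortExact (ResLE X · n) (hse.of_isPullback h) hW h₁)

theorem isClosedUnderExtensions_resLE [EnoughProjectives A] (hX : IsResolving X) (n : ℕ) :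
    ObjectProperty.IsClosedUnderExtensions (ResLE X · n) := by
  induction n with
  | zero =>
    constructor
    intro S hS h₁ h₃
    cases h₁ with
    | zero e hX₀ =>
      have hS' : (ShortComplex.mk (e.hom ≫ S.f) S.g (by simp)).ShortExact :=
        ShortComplex.shortExact_of_iso
          (ShortComplex.isoMk e.symm (Iso.refl _) (Iso.refl _) (by simp) (by simp)) hS
      exact (resLE_X₂_of_mem_X₁ hX hS' hX₀ h₃ :)
  | succ n ih =>
    constructor
    intro S hS h₁ h₃
    let π := Projective.π S.X₃
    have hπ : (ShortComplex.mk (kernel.ι π) π (kernel.condition π)).ShortExact :=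
      .mk' (ShortComplex.exact_of_f_is_kernel _ (kernelIsKernel π)) inferInstance inferInstance
    have hΩ : ResLE X (kernel π) n := resLE_X₁_of_resLE_succ_X₃ hX hπ
      (.of_mem hX (hX.projective_mem _ inferInstance) n) h₃
    have h := IsPullback.of_hasPullback S.g π
    have hV : ResLE X (pullback S.g π) (n + 1) :=
      resLE_X₂_of_mem_X₁ hX (hS.of_isPullback h).splittingOfProjective.shortExact_swap
        (hX.projective_mem _ inferInstance) h₁
    exact resLE_succ_X₃_of_resLE_X₁ (hπ.of_isPullback h.flip) hΩ hV

lemma resDim_le_iff (hX : IsResolving X) {M : A} : resDim X M ≤ n ↔ ResLE X M n := by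
  refine ⟨fun h => ?_, fun h => sInf_le ⟨n, h, rfl⟩⟩
  obtain ⟨_, ⟨m, hm, rfl⟩, hmn⟩ :=
    sInf_lt_iff.1 (h.trans_lt (by exact_mod_cast n.lt_succ_self : (n : ℕ∞) < (n + 1 : ℕ)))
  exact hm.mono hX (Nat.lt_succ_iff.1 (by exact_mod_cast hmn))

end ResolutionDimension

lemma ENat.le_of_forall_ge_natCast {a b : ℕ∞} (h : ∀ n : ℕ, a ≤ n → b ≤ n) : b ≤ a := by
  induction a using ENat.recTopCoe with
  | top => exact le_top
  | coe n => exact h n le_rfl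

/-- Bounds for resolution dimensions with respect to a resolving subcategory along
a short exact sequence `0 → X → Y → Z → 0` in an abelian category with enough
projectives. -/
theorem resDim_of_shortExact
    (A : Type u₁) [Category.{v₁} A] [Abelian A] [EnoughProjectives A]
    (X : Set A) (hX : IsResolving X) (S : ShortComplex A) (hS : S.ShortExact) :
    resDim X S.X₂ ≤ max (resDim X S.X₁) (resDim X S.X₃) ∧
    resDim X S.X₁ ≤ max (resDim X S.X₂) (resDim X S.X₃ - 1) ∧
    resDim X S.X₃ ≤ max (resDim X S.X₁ + 1) (resDim X S.X₂) := by
  have := isClosedUnderExtensions_resLE hX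
  refine ⟨?_, ?_, ?_⟩ <;> refine ENat.le_of_forall_ge_natCast fun n hn => ?_ <;>
    rw [max_le_iff] at hn
  · obtain ⟨h₁, h₃⟩ := hn
    rw [resDim_le_iff hX] at h₁ h₃ ⊢
    exact ObjectProperty.prop_X₂_of_shortExact (ResLE X · n) hS h₁ h₃
  · obtain ⟨h₂, h₃⟩ := hn
    rw [tsub_le_iff_right, ← Nat.cast_succ] at h₃
    rw [resDim_le_iff hX] at h₂ h₃ ⊢
    exact resLE_X₁_of_resLE_succ_X₃ hX hS h₂ h₃
  · obtain ⟨h₁, h₂⟩ := hn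
    obtain ⟨m, rfl⟩ : ∃ m, n = m + 1 :=
      Nat.exists_eq_add_one.2 (by exact_mod_cast (le_add_self.trans h₁ : (1 : ℕ∞) ≤ n))
    rw [Nat.cast_succ, ENat.add_le_add_iff_right ENat.one_ne_top] at h₁
    rw [resDim_le_iff hX] at h₁ h₂ ⊢
    exact resLE_succ_X₃_of_resLE_X₁ hS h₁ h₂
end

section
/- Let A be an abelian category with enough projectives, X a resolving subcategory of A, and M an object of A. Suppose 0 → X_n → X_{n−1} → ⋯ → X_0 → M → 0 and 0 → Y_n → Y_{n−1} → ⋯ → Y_0 → M → 0 are exact sequences with X_i, Y_i ∈ X for 0 ≤ i ≤ n−1. Then X_n ∈ X if and only if Y_n ∈ X. -/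
open CategoryTheory CategoryTheory.Limits

attribute [local instance] Abelian.hasFiniteBiproducts

universe v₁ v₂ v₃ u₁ u₂ u₃

variable {A : Type u₁} [Category.{v₁} A] [Abelian A]

/-- `IsSyzygy X n M K` : there is an exact sequence
`0 → K → X_{n-1} → ⋯ → X_0 → M → 0` with all the middle terms `X_i` in `X`. -/
inductive IsSyzygy {A : Type u₁} [Category.{v₁} A] [Abelian A] (X : Set A) :
    ℕ → A → A → Prop
  | zero {M K : A} (e : K ≅ M) : IsSyzygy X 0 M K
  | succ {M K K₁ X₀ : A} {n : ℕ} (f : K₁ ⟶ X₀) (g : X₀ ⟶ M) (w : f ≫ g = 0)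
      (hse : (ShortComplex.mk f g w).ShortExact) (hX₀ : X₀ ∈ X)
      (h : IsSyzygy X n K₁ K) : IsSyzygy X (n + 1) M K

/-! Pull the first steps `0 → K₁' → X₀ → M → 0` and `0 → K₂' → Y₀ → M → 0` back to
`P = X₀ ×_M Y₀`; this gives `0 → K₁' → P → Y₀ → 0` and `0 → K₂' → P → X₀ → 0`. An
`(n-1)`-syzygy `L` of `P`, which exists since `A` has enough projectives, is then also an
`(n-1)`-syzygy of `K₁'` and of `K₂'`, up to membership in `X`: pulling the first step
`W → P` of its resolution back along `K' → P` gives an object that lies in `X`, being the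
kernel of the epimorphism `W → P → Y₀` (resp. `W → P → X₀`). Induction on `n` compares both
`K₁` and `K₂` with `L`. -/

open ZeroObject

namespace CategoryTheory.ShortComplex.ShortExact

variable {S : ShortComplex A}

lemma baseChange {P Y : A} {fst : P ⟶ S.X₂} {snd : P ⟶ Y} {g : Y ⟶ S.X₃}
    (hS : S.ShortExact) (sq : IsPullback fst snd S.g g) :
    (ShortComplex.mk (sq.lift S.f 0 (by simp)) snd (by simp)).ShortExact := by
  have := hS.mono_f
  have := hS.epi_g
  have : Mono (sq.lift S.f 0 (by simp)) := mono_of_mono_fac (sq.lift_fst _ _ _)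
  have : Epi snd := Abelian.epi_snd_of_isLimit _ _ sq.isLimit
  refine .mk' (exact_of_f_is_kernel _ ?_) inferInstance inferInstance
  refine KernelFork.IsLimit.ofι' _ _ fun {T} t ht => ?_
  obtain ⟨u, hu⟩ := KernelFork.IsLimit.lift' hS.fIsKernel (t ≫ fst)
    (by rw [Category.assoc, sq.w, ← Category.assoc, ht, zero_comp])
  exact ⟨u, sq.hom_ext (by simpa using hu) (by simpa using ht.symm)⟩

lemma precompEpi {V W : A} {fst : V ⟶ W} {snd : V ⟶ S.X₁} {g : W ⟶ S.X₂} [Epi g]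
    (hS : S.ShortExact) (sq : IsPullback fst snd g S.f) :
    (ShortComplex.mk fst (g ≫ S.g)
      (by rw [← Category.assoc, sq.w, Category.assoc, S.zero, comp_zero])).ShortExact := by
  have := hS.mono_f
  have := hS.epi_g
  have : Mono fst := sq.mono_fst_of_mono
  refine .mk' (exact_of_f_is_kernel _ ?_) inferInstance inferInstance
  refine KernelFork.IsLimit.ofι' _ _ fun {T} t ht => ?_
  obtain ⟨u, hu⟩ := KernelFork.IsLimit.lift' hS.fIsKernel (t ≫ g) (by simpa using ht)
  exact ⟨sq.lift t u hu.symm, sq.lift_fst _ _ _⟩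

end CategoryTheory.ShortComplex.ShortExact

namespace IsResolving

variable {X : Set A}

lemma mem_iff_of_shortExact (hX : IsResolving X) {S : ShortComplex A} (hS : S.ShortExact)
    (h₃ : S.X₃ ∈ X) : S.X₁ ∈ X ↔ S.X₂ ∈ X :=
  ⟨fun h₁ => hX.ext_closed S hS h₁ h₃, fun h₂ => hX.ker_epi_closed S hS h₂ h₃⟩

lemma mem_iff_of_iso (hX : IsResolving X) {M N : A} (e : M ≅ N) : M ∈ X ↔ N ∈ X :=
  hX.mem_iff_of_shortExact (S := ShortComplex.mk e.hom (0 : N ⟶ 0) comp_zero)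
    (.mk' ((ShortComplex.exact_iff_epi _ rfl).2 inferInstance) inferInstance inferInstance)
    (hX.projective_mem 0 inferInstance)

end IsResolving

lemma exists_isSyzygy [EnoughProjectives A] {X : Set A}
    (hX : ∀ P : A, Projective P → P ∈ X) : ∀ (n : ℕ) (M : A), ∃ K, IsSyzygy X n M K
  | 0, M => ⟨M, .zero (Iso.refl M)⟩
  | n + 1, M =>
    have hπ : (ShortComplex.mk _ _ (kernel.condition (Projective.π M))).ShortExact :=
      .mk' (ShortComplex.exact_of_f_is_kernel _ (kernelIsKernel _)) inferInstance inferInstance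
    let ⟨K, hK⟩ := exists_isSyzygy hX n (kernel (Projective.π M))
    ⟨K, .succ _ _ _ hπ (hX _ inferInstance) hK⟩

lemma IsSyzygy.exists_isSyzygy_X₁ {X : Set A} (hX : IsResolving X) {S : ShortComplex A}
    (hS : S.ShortExact) (h₃ : S.X₃ ∈ X) {n : ℕ} {L : A} (h : IsSyzygy X n S.X₂ L) :
    ∃ L', IsSyzygy X n S.X₁ L' ∧ (L' ∈ X ↔ L ∈ X) := by
  cases h with
  | zero e =>
    exact ⟨S.X₁, .zero (Iso.refl _),
      (hX.mem_iff_of_shortExact hS h₃).trans (hX.mem_iff_of_iso e).symm⟩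
  | succ j g w hT hW h =>
    have := hT.epi_g
    have sq := IsPullback.of_hasPullback g S.f
    have hV : pullback g S.f ∈ X := hX.ker_epi_closed _ (hS.precompEpi sq) hW h₃
    exact ⟨L, .succ _ _ _ (hT.baseChange sq) hV h, Iff.rfl⟩

/-- Generalized Schanuel lemma for resolving subcategories: given two exact sequences
`0 → X_n → X_{n-1} → ⋯ → X_0 → M → 0` and `0 → Y_n → Y_{n-1} → ⋯ → Y_0 → M → 0` with
all middle terms in the resolving subcategory `X`, we have `X_n ∈ X ↔ Y_n ∈ X`. -/
theorem syzygy_mem_iff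
    (A : Type u₁) [Category.{v₁} A] [Abelian A] [EnoughProjectives A]
    (X : Set A) (hX : IsResolving X) (n : ℕ) (M K₁ K₂ : A)
    (h₁ : IsSyzygy X n M K₁) (h₂ : IsSyzygy X n M K₂) :
    K₁ ∈ X ↔ K₂ ∈ X := by
  induction n generalizing M K₁ K₂ with
  | zero =>
    cases h₁ with | zero e₁ => ?_
    cases h₂ with | zero e₂ => exact hX.mem_iff_of_iso (e₁ ≪≫ e₂.symm)
  | succ n ih =>
    cases h₁ with | succ f₁ g₁ w₁ hS₁ hX₀ h₁ => ?_
    cases h₂ with | succ f₂ g₂ w₂ hS₂ hY₀ h₂ => ?_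
    have sq := IsPullback.of_hasPullback g₁ g₂
    obtain ⟨L, hL⟩ := exists_isSyzygy hX.projective_mem n (pullback g₁ g₂)
    obtain ⟨L₁, hL₁, hiff₁⟩ := hL.exists_isSyzygy_X₁ hX (hS₁.baseChange sq) hY₀
    obtain ⟨L₂, hL₂, hiff₂⟩ := hL.exists_isSyzygy_X₁ hX (hS₂.baseChange sq.flip) hX₀
    calc K₁ ∈ X ↔ L₁ ∈ X := ih _ _ _ h₁ hL₁
      _ ↔ L ∈ X := hiff₁
      _ ↔ L₂ ∈ X := hiff₂.symm
      _ ↔ K₂ ∈ X := ih _ _ _ hL₂ h₂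
end

section
/- Let (A, B, C) be a recollement of abelian categories, and let X' and X'' be resolving subcategories of A and C respectively. If i* is exact and j* preserves projective objects, then X := {B ∈ B : i*(B) ∈ X' and j*(B) ∈ X''} is a resolving subcategory of B. -/
open CategoryTheory CategoryTheory.Limits

attribute [local instance] Abelian.hasFiniteBiproducts

universe v₁ v₂ v₃ u₁ u₂ u₃

variable {A : Type u₁} [Category.{v₁} A] [Abelian A]

/-- Gluing of resolving subcategories: if `i*` is exact and `j*` preserves projectives,
then `{B | i*(B) ∈ X' and j*(B) ∈ X''}` is resolving in `B`. -/
theorem glued_isResolving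
    (A : Type u₁) (B : Type u₂) (C : Type u₃)
    [Category.{v₁} A] [Category.{v₂} B] [Category.{v₃} C]
    [Abelian A] [Abelian B] [Abelian C]
    [EnoughProjectives A] [EnoughProjectives B] [EnoughProjectives C]
    (R : Recollement A B C)
    (X' : Set A) (X'' : Set C) (hX' : IsResolving X') (hX'' : IsResolving X'')
    (hi : PreservesFiniteLimits R.iStar)
    (hj : ∀ b : B, Projective b → Projective (R.jStar.obj b)) :
    IsResolving {b : B | R.iStar.obj b ∈ X' ∧ R.jStar.obj b ∈ X''} := by

  have hiL : PreservesFiniteLimits R.iLower := R.iLower_preservesFiniteLimits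
  have hiC : PreservesFiniteColimits R.iLower := R.iLower_preservesFiniteColimits
  have hiSC : PreservesFiniteColimits R.iStar := R.iStar_preservesFiniteColimits
  have hjL : PreservesFiniteLimits R.jStar := R.jStar_preservesFiniteLimits
  have hjC : PreservesFiniteColimits R.jStar := R.jStar_preservesFiniteColimits
  constructor
  · intro P hP
    refine ⟨hX'.projective_mem _ ?_, hX''.projective_mem _ (hj P hP)⟩
    have : R.iLower.PreservesEpimorphisms := inferInstance
    exact R.adj₁.map_projective P hP
  · intro S hS h1 h3
    refine ⟨hX'.ext_closed (S.map R.iStar) (hS.map_of_exact R.iStar) h1.1 h3.1,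
      hX''.ext_closed (S.map R.jStar) (hS.map_of_exact R.jStar) h1.2 h3.2⟩
  · intro S hS h2 h3
    refine ⟨hX'.ker_epi_closed (S.map R.iStar) (hS.map_of_exact R.iStar) h2.1 h3.1,
      hX''.ker_epi_closed (S.map R.jStar) (hS.map_of_exact R.jStar) h2.2 h3.2⟩
end

section
/- Let (A, B, C) be a recollement of abelian categories with i* exact and j* preserving projectives, and let X' ⊆ A, X'' ⊆ C be resolving subcategories. Set X := {B ∈ B : i*(B) ∈ X' and j*(B) ∈ X''}. Then i_*(X') ⊆ X, j_!(X'') ⊆ X, and moreover i*(X) = X' and j*(X) = X'' (up to closure under isomorphism). -/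
open CategoryTheory CategoryTheory.Limits

attribute [local instance] Abelian.hasFiniteBiproducts

universe v₁ v₂ v₃ u₁ u₂ u₃

variable {A : Type u₁} [Category.{v₁} A] [Abelian A]

lemma IsResolving.zero_mem {X : Set A} (h : IsResolving X) {Z : A} (hZ : IsZero Z) : Z ∈ X :=
  h.projective_mem Z ⟨fun f e _ => ⟨hZ.to_ _, hZ.eq_of_src _ _⟩⟩

open ZeroObject in
lemma IsResolving.mem_of_iso {X : Set A} (h : IsResolving X) {Y Z : A} (e : Y ≅ Z)
    (hZ : Z ∈ X) : Y ∈ X := by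
  have hm : Mono (0 : (0 : A) ⟶ Y) := ⟨fun g h _ => (isZero_zero A).eq_of_tgt g h⟩
  have hse : (ShortComplex.mk (0 : (0 : A) ⟶ Y) e.hom (by simp)).ShortExact :=
    { exact := (ShortComplex.exact_iff_mono _ rfl).mpr (by dsimp; infer_instance)
      mono_f := hm
      epi_g := by dsimp; infer_instance }
  exact h.ext_closed _ hse (h.zero_mem (isZero_zero A)) hZ

/-- Properties of the glued resolving subcategory:
`i_*(X') ⊆ X`, `j_!(X'') ⊆ X`, `i*(X) = X'` and `j*(X) = X''` (up to isomorphism). -/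
theorem glued_resolving_properties
    (A : Type u₁) (B : Type u₂) (C : Type u₃)
    [Category.{v₁} A] [Category.{v₂} B] [Category.{v₃} C]
    [Abelian A] [Abelian B] [Abelian C]
    [EnoughProjectives A] [EnoughProjectives B] [EnoughProjectives C]
    (R : Recollement A B C)
    (X' : Set A) (X'' : Set C) (hX' : IsResolving X') (hX'' : IsResolving X'')
    (hi : PreservesFiniteLimits R.iStar)
    (hj : ∀ b : B, Projective b → Projective (R.jStar.obj b))
    (X : Set B) (hXdef : X = {b : B | R.iStar.obj b ∈ X' ∧ R.jStar.obj b ∈ X''}) :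
    (∀ a ∈ X', R.iLower.obj a ∈ X) ∧
    (∀ c ∈ X'', R.jLower.obj c ∈ X) ∧
    (∀ a : A, a ∈ X' ↔ ∃ b ∈ X, Nonempty (R.iStar.obj b ≅ a)) ∧
    (∀ c : C, c ∈ X'' ↔ ∃ b ∈ X, Nonempty (R.jStar.obj b ≅ c)) := by
  haveI := R.iLower_full
  haveI := R.iLower_faithful
  haveI := R.jLower_full
  haveI := R.jLower_faithful
  subst hXdef
  -- `j* i_* a` is zero
  have hji : ∀ a : A, IsZero (R.jStar.obj (R.iLower.obj a)) := fun a =>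
    (R.im_eq_ker _).mpr ⟨a, ⟨Iso.refl _⟩⟩
  -- the counit of `i* ⊣ i_*` is an isomorphism
  have hii : ∀ a : A, R.iStar.obj (R.iLower.obj a) ≅ a := fun a =>
    asIso (R.adj₁.counit.app a)
  -- the unit of `j_! ⊣ j*` is an isomorphism
  have hjj : ∀ c : C, R.jStar.obj (R.jLower.obj c) ≅ c := fun c =>
    (asIso (R.adj₃.unit.app c)).symm
  -- `i* j_! c` is zero
  have hij : ∀ c : C, IsZero (R.iStar.obj (R.jLower.obj c)) := by
    intro c
    set Z := R.iStar.obj (R.jLower.obj c) with hZ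
    have hz : IsZero (R.jStar.obj (R.iLower.obj Z)) := hji Z
    rw [IsZero.iff_id_eq_zero]
    apply (R.adj₁.homEquiv _ _).injective
    apply (R.adj₃.homEquiv _ _).injective
    exact hz.eq_of_tgt _ _
  have h1 : ∀ a ∈ X', R.iLower.obj a ∈
      {b : B | R.iStar.obj b ∈ X' ∧ R.jStar.obj b ∈ X''} := fun a ha =>
    ⟨hX'.mem_of_iso (hii a) ha, hX''.zero_mem (hji a)⟩
  have h2 : ∀ c ∈ X'', R.jLower.obj c ∈
      {b : B | R.iStar.obj b ∈ X' ∧ R.jStar.obj b ∈ X''} := fun c hc =>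
    ⟨hX'.zero_mem (hij c), hX''.mem_of_iso (hjj c) hc⟩
  refine ⟨h1, h2, fun a => ⟨fun ha => ⟨R.iLower.obj a, h1 a ha, ⟨hii a⟩⟩, ?_⟩,
    fun c => ⟨fun hc => ⟨R.jLower.obj c, h2 c hc, ⟨hjj c⟩⟩, ?_⟩⟩
  · rintro ⟨b, hb, ⟨e⟩⟩
    exact hX'.mem_of_iso e.symm hb.1
  · rintro ⟨b, hb, ⟨e⟩⟩
    exact hX''.mem_of_iso e.symm hb.2
end

section
/- Let (A, B, C) be a recollement of abelian categories and let X be a resolving subcategory of B. If the essential image X' := add i*(X) satisfies i_*(X') ⊆ X, then X' is a resolving subcategory of A. -/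
open CategoryTheory CategoryTheory.Limits

attribute [local instance] Abelian.hasFiniteBiproducts

universe v₁ v₂ v₃ u₁ u₂ u₃

variable {A : Type u₁} [Category.{v₁} A] [Abelian A]

lemma mem_addClosure_of_iso {A : Type u₁} [Category.{v₁} A] [Abelian A]
    {D : Set A} {a d : A} (hd : d ∈ D) (e : a ≅ d) : a ∈ addClosure D := by
  refine ⟨1, fun _ => d, fun _ => hd,
    e.hom ≫ biproduct.ι (fun (_ : Fin 1) => d) 0,
    biproduct.π (fun (_ : Fin 1) => d) 0 ≫ e.inv, ?_⟩
  simp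

/-- If `X` is resolving in `B` and `X' := add i*(X)` satisfies `i_*(X') ⊆ X`,
then `X'` is resolving in `A`. -/
theorem iStar_image_isResolving
    (A : Type u₁) (B : Type u₂) (C : Type u₃)
    [Category.{v₁} A] [Category.{v₂} B] [Category.{v₃} C]
    [Abelian A] [Abelian B] [Abelian C] [EnoughProjectives B]
    (R : Recollement A B C)
    (X : Set B) (hX : IsResolving X)
    (X' : Set A) (hX'def : X' = addClosure (R.iStar.obj '' X))
    (h : ∀ a ∈ X', R.iLower.obj a ∈ X) :
    IsResolving X' := by
  haveI := R.iLower_full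
  haveI := R.iLower_faithful
  haveI := R.iLower_preservesFiniteLimits
  haveI := R.iLower_preservesFiniteColimits
  haveI : R.iLower.IsLeftAdjoint := ⟨_, ⟨R.adj₂⟩⟩
  haveI : R.iStar.IsLeftAdjoint := ⟨_, ⟨R.adj₁⟩⟩
  subst hX'def
  constructor
  · intro P hP
    haveI := hP
    set Q := Projective.over (R.iLower.obj P) with hQdef
    have hQ : Q ∈ X := hX.projective_mem Q inferInstance
    let e : R.iStar.obj Q ⟶ P :=
      R.iStar.map (Projective.π (R.iLower.obj P)) ≫ R.adj₁.counit.app P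
    have hπ : Epi (R.iStar.map (Projective.π (R.iLower.obj P))) :=
      R.iStar.map_epi _
    have he : Epi e := epi_comp _ _
    refine ⟨1, fun _ => R.iStar.obj Q, fun _ => ⟨Q, hQ, rfl⟩,
      Projective.factorThru (𝟙 P) e ≫ biproduct.ι (fun (_ : Fin 1) => R.iStar.obj Q) 0,
      biproduct.π (fun (_ : Fin 1) => R.iStar.obj Q) 0 ≫ e, ?_⟩
    simp
  · intro S hS h1 h3
    have hB : (S.map R.iLower).ShortExact := hS.map_of_exact R.iLower
    have h2 : R.iLower.obj S.X₂ ∈ X := hX.ext_closed _ hB (h _ h1) (h _ h3)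
    exact mem_addClosure_of_iso ⟨_, h2, rfl⟩ (asIso (R.adj₁.counit.app S.X₂)).symm
  · intro S hS h2 h3
    have hB : (S.map R.iLower).ShortExact := hS.map_of_exact R.iLower
    have h1 : R.iLower.obj S.X₁ ∈ X := hX.ker_epi_closed _ hB (h _ h2) (h _ h3)
    exact mem_addClosure_of_iso ⟨_, h1, rfl⟩ (asIso (R.adj₁.counit.app S.X₁)).symm
end

section
/- Let (A, B, C) be a recollement of abelian categories and X a resolving subcategory of B. Set X'' := add j*(X). If j_!(X'') ⊆ X, the functor j_! is exact, and j* preserves projectives, then X'' is a resolving subcategory of C. -/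
open CategoryTheory CategoryTheory.Limits

attribute [local instance] Abelian.hasFiniteBiproducts

universe v₁ v₂ v₃ u₁ u₂ u₃

variable {A : Type u₁} [Category.{v₁} A] [Abelian A]

/-- An object admitting a retraction from a member of `D` lies in `addClosure D`. -/
lemma mem_addClosure_of_retract {D : Set A} {a b : A} (hb : b ∈ D)
    (s : a ⟶ b) (r : b ⟶ a) (hsr : s ≫ r = 𝟙 a) : a ∈ addClosure D := by
  refine ⟨1, fun _ => b, fun _ => hb,
    s ≫ biproduct.ι (fun _ : Fin 1 => b) 0, biproduct.π (fun _ : Fin 1 => b) 0 ≫ r, ?_⟩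
  rw [Category.assoc, biproduct.ι_π_assoc]
  simp [hsr]

lemma mem_addClosure_of_iso_s10 {D : Set A} {a b : A} (hb : b ∈ D) (e : a ≅ b) :
    a ∈ addClosure D :=
  mem_addClosure_of_retract hb e.hom e.inv e.hom_inv_id

/-- If `X` is resolving in `B`, `X'' := add j*(X)` satisfies `j_!(X'') ⊆ X`, `j_!` is
exact and `j*` preserves projectives, then `X''` is resolving in `C`. -/
theorem jStar_image_isResolving_of_jLower
    (A : Type u₁) (B : Type u₂) (C : Type u₃)
    [Category.{v₁} A] [Category.{v₂} B] [Category.{v₃} C]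
    [Abelian A] [Abelian B] [Abelian C] [EnoughProjectives B]
    (R : Recollement A B C)
    (X : Set B) (hX : IsResolving X)
    (X'' : Set C) (hX''def : X'' = addClosure (R.jStar.obj '' X))
    (h : ∀ c ∈ X'', R.jLower.obj c ∈ X)
    (hjl : PreservesFiniteLimits R.jLower)
    (hj : ∀ b : B, Projective b → Projective (R.jStar.obj b)) :
    IsResolving X'' := by
  have : R.jLower.IsLeftAdjoint := ⟨_, ⟨R.adj₃⟩⟩
  have : R.jStar.IsLeftAdjoint := ⟨_, ⟨R.adj₄⟩⟩
  have := R.jStar_preservesFiniteColimits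
  have := R.jLower_preservesFiniteColimits
  have := R.jLower_full
  have := R.jLower_faithful
  -- the unit of `j_! ⊣ j*` is an isomorphism
  have hunit : ∀ c : C, c ≅ R.jStar.obj (R.jLower.obj c) := fun c =>
    (asIso (R.adj₃.unit.app c) : c ≅ (R.jLower ⋙ R.jStar).obj c)
  -- any object of the form `j* b` with `b ∈ X` lies in `X''`
  have hmem : ∀ b : B, b ∈ X → R.jStar.obj b ∈ X'' := fun b hb => by
    rw [hX''def]
    exact mem_addClosure_of_iso_s10 ⟨b, hb, rfl⟩ (Iso.refl _)
  constructor
  · -- projectives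
    intro P hP
    set Q := Projective.over (R.jLower.obj P) with hQ
    set π := Projective.π (R.jLower.obj P) with hπdef
    have hepi : Epi (R.jStar.map π ≫ (hunit P).inv) := epi_comp _ _
    have hs := Projective.factorThru_comp (𝟙 P) (R.jStar.map π ≫ (hunit P).inv)
    rw [hX''def]
    exact mem_addClosure_of_retract ⟨Q, hX.projective_mem Q (Projective.projective_over _), rfl⟩
      (Projective.factorThru (𝟙 P) (R.jStar.map π ≫ (hunit P).inv))
      (R.jStar.map π ≫ (hunit P).inv) hs
  · -- closed under extensions
    intro S hse h1 h3
    have hse' : (S.map R.jLower).ShortExact := hse.map_of_exact R.jLower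
    have h2 : R.jLower.obj S.X₂ ∈ X :=
      hX.ext_closed (S.map R.jLower) hse' (h _ h1) (h _ h3)
    exact Set.mem_of_eq_of_mem rfl
      (by rw [hX''def]; exact mem_addClosure_of_iso_s10 ⟨_, h2, rfl⟩ (hunit S.X₂))
  · -- closed under kernels of epimorphisms
    intro S hse h2 h3
    have hse' : (S.map R.jLower).ShortExact := hse.map_of_exact R.jLower
    have h1 : R.jLower.obj S.X₁ ∈ X :=
      hX.ker_epi_closed (S.map R.jLower) hse' (h _ h2) (h _ h3)
    rw [hX''def]
    exact mem_addClosure_of_iso_s10 ⟨_, h1, rfl⟩ (hunit S.X₁)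
end

section
/- Let (A, B, C) be a recollement of abelian categories with i* exact, X resolving in B, X' := add i*(X), X'' := add j*(X). If i_*(X') ⊆ X and j_!(X'') ⊆ X, then X = {B ∈ B : i*(B) ∈ X' and j*(B) ∈ X''}. -/
open CategoryTheory CategoryTheory.Limits

attribute [local instance] Abelian.hasFiniteBiproducts

universe v₁ v₂ v₃ u₁ u₂ u₃

variable {A : Type u₁} [Category.{v₁} A] [Abelian A]

section Aux

lemma isZero_src_of_mono_of_eq_zero {D : Type*} [Category D] [HasZeroMorphisms D]
    {X Y : D} (f : X ⟶ Y) [Mono f] (h : f = 0) : IsZero X := by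
  rw [IsZero.iff_id_eq_zero, ← cancel_mono f, h]
  simp

lemma isZero_tgt_of_epi_of_eq_zero {D : Type*} [Category D] [HasZeroMorphisms D]
    {X Y : D} (f : X ⟶ Y) [Epi f] (h : f = 0) : IsZero Y := by
  rw [IsZero.iff_id_eq_zero, ← cancel_epi f, h]
  simp

variable {𝒜 : Type u₁} {ℬ : Type u₂} {𝒞 : Type u₃}
    [Category.{v₁} 𝒜] [Category.{v₂} ℬ] [Category.{v₃} 𝒞]
    [Abelian 𝒜] [Abelian ℬ] [Abelian 𝒞] (R : Recollement 𝒜 ℬ 𝒞)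

lemma Recollement.isZero_jStar_iLower (x : 𝒜) :
    IsZero (R.jStar.obj (R.iLower.obj x)) :=
  (R.im_eq_ker _).mpr ⟨x, ⟨Iso.refl _⟩⟩

lemma Recollement.isZero_of_isZero (q : ℬ) (h1 : IsZero (R.iStar.obj q))
    (h2 : IsZero (R.jStar.obj q)) : IsZero q := by
  obtain ⟨a, ⟨e⟩⟩ := (R.im_eq_ker q).mp h2
  have hinv : e.inv = 0 := by
    apply (R.adj₁.homEquiv q a).symm.injective
    exact h1.eq_of_src _ _
  rw [IsZero.iff_id_eq_zero, ← e.inv_hom_id, hinv, zero_comp]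

lemma Recollement.isZero_iStar_jLower (c : 𝒞) :
    IsZero (R.iStar.obj (R.jLower.obj c)) := by
  rw [IsZero.iff_id_eq_zero]
  apply (R.adj₁.homEquiv _ _).injective
  apply (R.adj₃.homEquiv _ _).injective
  exact (R.isZero_jStar_iLower _).eq_of_tgt _ _

/-- When `i^*` is exact, `0 → j_! j^* b → b → i_* i^* b → 0` is short exact. -/
lemma Recollement.shortExact_counit_unit (hi : PreservesFiniteLimits R.iStar) (b : ℬ) :
    ∃ w : R.adj₃.counit.app b ≫ R.adj₁.unit.app b = 0,
      (ShortComplex.mk (R.adj₃.counit.app b) (R.adj₁.unit.app b) w).ShortExact := by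
  haveI := R.iLower_full; haveI := R.iLower_faithful
  haveI := R.jLower_full; haveI := R.jLower_faithful
  haveI := hi
  haveI := R.iStar_preservesFiniteColimits
  haveI := R.jStar_preservesFiniteLimits
  haveI := R.jStar_preservesFiniteColimits
  haveI := R.adj₁.isLeftAdjoint
  haveI := R.adj₃.isRightAdjoint
  set ε := R.adj₃.counit.app b with hεdef
  set η := R.adj₁.unit.app b with hηdef
  have w : ε ≫ η = 0 := by
    apply (R.adj₃.homEquiv _ _).injective
    exact (R.isZero_jStar_iLower _).eq_of_tgt _ _
  have hjε : IsIso (R.jStar.map ε) := by rw [hεdef]; infer_instance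
  have hiη : IsIso (R.iStar.map η) := by rw [hηdef]; infer_instance
  -- ε is a monomorphism
  haveI monoε : Mono ε := by
    apply Preadditive.mono_of_isZero_kernel
    apply R.isZero_of_isZero
    · exact isZero_src_of_mono_of_eq_zero (R.iStar.map (kernel.ι ε))
        ((R.isZero_iStar_jLower _).eq_of_tgt _ _)
    · refine isZero_src_of_mono_of_eq_zero (R.jStar.map (kernel.ι ε)) ?_
      have h0 : R.jStar.map (kernel.ι ε) ≫ R.jStar.map ε = 0 := by
        rw [← Functor.map_comp, kernel.condition, Functor.map_zero]
      exact zero_of_comp_mono _ h0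
  -- η is an epimorphism
  haveI epiη : Epi η := by
    apply Preadditive.epi_of_isZero_cokernel
    apply R.isZero_of_isZero
    · refine isZero_tgt_of_epi_of_eq_zero (R.iStar.map (cokernel.π η)) ?_
      have h0 : R.iStar.map η ≫ R.iStar.map (cokernel.π η) = 0 := by
        rw [← Functor.map_comp, cokernel.condition, Functor.map_zero]
      exact zero_of_epi_comp _ h0
    · exact isZero_tgt_of_epi_of_eq_zero (R.jStar.map (cokernel.π η))
        ((R.isZero_jStar_iLower _).eq_of_src _ _)
  -- the canonical map to the kernel of η is an isomorphism
  set u : R.jLower.obj (R.jStar.obj b) ⟶ kernel η := kernel.lift η ε w with hudef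
  have hu : u ≫ kernel.ι η = ε := kernel.lift_ι _ _ _
  haveI : Mono u := mono_of_mono_fac hu
  have hkη_i : IsZero (R.iStar.obj (kernel η)) := by
    refine isZero_src_of_mono_of_eq_zero (R.iStar.map (kernel.ι η)) ?_
    have h0 : R.iStar.map (kernel.ι η) ≫ R.iStar.map η = 0 := by
      rw [← Functor.map_comp, kernel.condition, Functor.map_zero]
    exact zero_of_comp_mono _ h0
  haveI epiu : Epi u := by
    apply Preadditive.epi_of_isZero_cokernel
    apply R.isZero_of_isZero
    · exact isZero_tgt_of_epi_of_eq_zero (R.iStar.map (cokernel.π u))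
        (hkη_i.eq_of_src _ _)
    · refine isZero_tgt_of_epi_of_eq_zero (R.jStar.map (cokernel.π u)) ?_
      have hznu : R.jStar.map u ≫ R.jStar.map (cokernel.π u) = 0 := by
        rw [← Functor.map_comp, cokernel.condition, Functor.map_zero]
      have hcomp : R.jStar.map u ≫ R.jStar.map (kernel.ι η) = R.jStar.map ε := by
        rw [← Functor.map_comp, hu]
      haveI : Epi (R.jStar.map u ≫ R.jStar.map (kernel.ι η)) := by
        rw [hcomp]; infer_instance
      haveI : Epi (R.jStar.map (kernel.ι η)) := epi_of_epi (R.jStar.map u) _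
      haveI : IsIso (R.jStar.map (kernel.ι η)) := isIso_of_mono_of_epi _
      haveI : Epi (R.jStar.map u) := by
        have he : R.jStar.map u = R.jStar.map ε ≫ inv (R.jStar.map (kernel.ι η)) := by
          rw [← hcomp]; simp
        rw [he]; exact epi_comp _ _
      exact zero_of_epi_comp _ hznu
  haveI : IsIso u := isIso_of_mono_of_epi u
  refine ⟨w, ?_⟩
  have hlim : IsLimit (KernelFork.ofι ε w) := by
    refine KernelFork.IsLimit.ofι' ε w (fun {T} k hk => ⟨kernel.lift η k hk ≫ inv u, ?_⟩)
    rw [Category.assoc, ← hu, ← Category.assoc (inv u), IsIso.inv_hom_id, Category.id_comp,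
      kernel.lift_ι]
  exact { exact := ShortComplex.exact_of_f_is_kernel _ hlim,
          mono_f := monoε, epi_g := epiη }

end Aux

/-- If `i*` is exact, `X` is resolving in `B`, `X' := add i*(X)`, `X'' := add j*(X)`,
`i_*(X') ⊆ X` and `j_!(X'') ⊆ X`, then `X = {B | i*(B) ∈ X' and j*(B) ∈ X''}`. -/
theorem resolving_eq_glued
    (A : Type u₁) (B : Type u₂) (C : Type u₃)
    [Category.{v₁} A] [Category.{v₂} B] [Category.{v₃} C]
    [Abelian A] [Abelian B] [Abelian C] [EnoughProjectives B]
    (R : Recollement A B C) (hi : PreservesFiniteLimits R.iStar)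
    (X : Set B) (hX : IsResolving X)
    (X' : Set A) (hX'def : X' = addClosure (R.iStar.obj '' X))
    (X'' : Set C) (hX''def : X'' = addClosure (R.jStar.obj '' X))
    (h₁ : ∀ a ∈ X', R.iLower.obj a ∈ X)
    (h₂ : ∀ c ∈ X'', R.jLower.obj c ∈ X) :
    X = {b : B | R.iStar.obj b ∈ X' ∧ R.jStar.obj b ∈ X''} := by
  ext b
  simp only [Set.mem_setOf_eq]
  constructor
  · intro hb
    constructor
    · rw [hX'def]
      exact ⟨1, fun _ => R.iStar.obj b, fun _ => ⟨b, hb, rfl⟩,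
        biproduct.ι (fun _ : Fin 1 => R.iStar.obj b) 0,
        biproduct.π (fun _ : Fin 1 => R.iStar.obj b) 0, biproduct.ι_π_self _ _⟩
    · rw [hX''def]
      exact ⟨1, fun _ => R.jStar.obj b, fun _ => ⟨b, hb, rfl⟩,
        biproduct.ι (fun _ : Fin 1 => R.jStar.obj b) 0,
        biproduct.π (fun _ : Fin 1 => R.jStar.obj b) 0, biproduct.ι_π_self _ _⟩
  · rintro ⟨h1, h2⟩
    obtain ⟨w, hse⟩ := R.shortExact_counit_unit hi b
    exact hX.ext_closed _ hse (h₂ _ h2) (h₁ _ h1)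
end

section
/- Let (A, B, C) be a recollement of abelian categories with enough projectives, and let X_A, X_B, X_C be resolving subcategories of A, B, C respectively. Then X_B-res i_*(A) ≤ X_A-res A + X_B-res i_*(X_A), i.e., for every object M of A, the X_B-resolution dimension of i_*(M) is at most the X_A-resolution dimension of M plus the supremum of X_B-resolution dimensions of objects i_*(X) with X ∈ X_A. -/
open CategoryTheory CategoryTheory.Limits

attribute [local instance] Abelian.hasFiniteBiproducts

universe v₁ v₂ v₃ u₁ u₂ u₃

variable {A : Type u₁} [Category.{v₁} A] [Abelian A]

/-!
Induct on an `X_A`-resolution of `M`. The exact functor `i_*` turns its first step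
`0 → K → X₀ → M → 0` into a short exact sequence in `B`, and for a resolving subcategory of a
category with enough projectives the resolution dimension of the cokernel of a short exact
sequence exceeds the larger of the other two by at most one. That bound follows from the horseshoe
lemma (the middle term's dimension is at most the larger of the ends') and the Schanuel-type fact
that the kernel of an epimorphism from an object of the subcategory onto an object of dimension
`≤ n` has dimension `≤ n - 1`. The diagram chases are all instances of the snake lemma.
-/

namespace CategoryTheory.ShortComplex

open ZeroObject

variable {C : Type*} [Category C] [Abelian C]

lemma SnakeInput.shortExact_L₀ (S : SnakeInput C) [Mono S.L₁.f] [Epi S.v₁₂.τ₁] :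
    S.L₀.ShortExact where
  exact := S.L₀_exact
  epi_g := by
    have hv : S.v₂₃.τ₁ = 0 := by
      rw [← cancel_epi S.v₁₂.τ₁, comp_zero, ← comp_τ₁, S.w₁₃, zero_τ₁]
    -- `S.δ` lands in `S.L₃.X₁`, the cokernel of the epimorphism `S.v₁₂.τ₁`
    have hδ : S.δ = 0 := (IsZero.of_epi_eq_zero _ hv).eq_of_tgt _ _
    exact S.L₁'_exact.epi_f hδ

lemma shortExact_kernel_map {S₁ S₂ : ShortComplex C} (φ : S₁ ⟶ S₂) (h₁ : S₁.ShortExact)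
    (h₂ : S₂.Exact) [Mono S₂.f] [Epi φ.τ₁] :
    (ShortComplex.mk (kernel.map φ.τ₁ φ.τ₂ S₁.f S₂.f φ.comm₁₂)
      (kernel.map φ.τ₂ φ.τ₃ S₁.g S₂.g φ.comm₂₃) (by ext; simp)).ShortExact := by
  have := h₁.mono_f
  have := h₁.epi_g
  let T : SnakeInput C :=
    { L₀ := ShortComplex.mk _ _ (by ext; simp : kernel.map φ.τ₁ φ.τ₂ S₁.f S₂.f φ.comm₁₂ ≫
        kernel.map φ.τ₂ φ.τ₃ S₁.g S₂.g φ.comm₂₃ = 0)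
      L₁ := S₁
      L₂ := S₂
      L₃ := ShortComplex.mk (cokernel.map φ.τ₁ φ.τ₂ S₁.f S₂.f φ.comm₁₂)
        (cokernel.map φ.τ₂ φ.τ₃ S₁.g S₂.g φ.comm₂₃) (by ext; simp)
      v₀₁ := { τ₁ := kernel.ι φ.τ₁, τ₂ := kernel.ι φ.τ₂, τ₃ := kernel.ι φ.τ₃ }
      v₁₂ := φ
      v₂₃ := { τ₁ := cokernel.π φ.τ₁, τ₂ := cokernel.π φ.τ₂, τ₃ := cokernel.π φ.τ₃ }
      h₀ := by
        apply ShortComplex.isLimitOfIsLimitπ <;>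
          exact (KernelFork.isLimitMapConeEquiv _ _).2 (kernelIsKernel _)
      h₃ := by
        apply ShortComplex.isColimitOfIsColimitπ <;>
          exact (CokernelCofork.isColimitMapCoconeEquiv _ _).2 (cokernelIsCokernel _)
      L₁_exact := h₁.exact
      epi_L₁_g := inferInstance
      L₂_exact := h₂
      mono_L₂_f := inferInstance }
  exact T.shortExact_L₀

lemma shortExact_kernel_comp {X Y Z : C} (f : X ⟶ Y) (g : Y ⟶ Z) [Epi f] :
    (ShortComplex.mk (kernel.map f (f ≫ g) (𝟙 _) g (by simp))
      (kernel.map (f ≫ g) g f (𝟙 _) (by simp))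
      (by ext; simp)).ShortExact := by
  have : Mono (kernelCokernelCompSequence.snakeInput f g).L₁.f :=
    (inferInstance : Mono (biprod.inl : X ⟶ X ⊞ Y))
  have : Epi (kernelCokernelCompSequence.snakeInput f g).v₁₂.τ₁ := (inferInstance : Epi f)
  exact (kernelCokernelCompSequence.snakeInput f g).shortExact_L₀

lemma shortExact_kernel {X Y : C} (g : X ⟶ Y) [Epi g] :
    (ShortComplex.mk (kernel.ι g) g (kernel.condition g)).ShortExact :=
  .mk' (exact_of_f_is_kernel _ (kernelIsKernel g)) inferInstance inferInstance

lemma ShortExact.comp_iso_X₃ {S : ShortComplex C} (hS : S.ShortExact) {Y : C} (e : S.X₃ ≅ Y) :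
    (ShortComplex.mk S.f (S.g ≫ e.hom) (by simp)).ShortExact :=
  shortExact_of_iso (isoMk (S₁ := S) (Iso.refl _) (Iso.refl _) e) hS

noncomputable def ShortExact.isoKernel {S : ShortComplex C} (hS : S.ShortExact) :
    S.X₁ ≅ kernel S.g :=
  have := hS.mono_f
  IsLimit.conePointUniqueUpToIso hS.exact.fIsKernel (limit.isLimit _)

lemma ShortExact.exists_horseshoe [EnoughProjectives C] {S : ShortComplex C} (hS : S.ShortExact)
    {G : C} (u : G ⟶ S.X₁) [Epi u] :
    ∃ (m : G ⊞ Projective.over S.X₃ ⟶ S.X₂) (i : kernel u ⟶ kernel m)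
      (p : kernel m ⟶ kernel (Projective.π S.X₃)) (w : i ≫ p = 0),
      Epi m ∧ (ShortComplex.mk i p w).ShortExact := by
  have := hS.mono_f
  have := hS.epi_g
  let l := Projective.factorThru (Projective.π S.X₃) S.g
  let φ : ShortComplex.mk biprod.inl biprod.snd biprod.inl_snd ⟶ S :=
    { τ₁ := u
      τ₂ := biprod.desc (u ≫ S.f) l
      τ₃ := Projective.π S.X₃
      comm₂₃ := by ext <;> simp [l] }
  have : Epi φ.τ₁ := ‹Epi u›
  have : Epi φ.τ₃ := Projective.π_epi S.X₃
  exact ⟨_, _, _, _, epi_τ₂_of_exact_of_epi φ hS.exact,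
    shortExact_kernel_map φ (Splitting.ofHasBinaryBiproduct _ _).shortExact hS.exact⟩

lemma exists_shortExact_kernel_biprod_desc {G G' M : C} (e : G ⟶ M) (e' : G' ⟶ M) [Epi e] :
    ∃ (i : kernel e ⟶ kernel (biprod.desc e e')) (p : kernel (biprod.desc e e') ⟶ G')
      (w : i ≫ p = 0), (ShortComplex.mk i p w).ShortExact := by
  let φ : ShortComplex.mk (biprod.inl : G ⟶ G ⊞ G') biprod.snd biprod.inl_snd ⟶
      ShortComplex.mk (𝟙 M) (0 : M ⟶ 0) comp_zero :=
    { τ₁ := e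
      τ₂ := biprod.desc e e'
      τ₃ := 0 }
  have : Epi φ.τ₁ := ‹Epi e›
  have h := shortExact_kernel_map φ (Splitting.ofHasBinaryBiproduct _ _).shortExact
    (Splitting.ofIsIsoOfIsZero _ inferInstance (isZero_zero C)).exact
  exact ⟨_, _, _, h.comp_iso_X₃ kernelZeroIsoSource⟩

end CategoryTheory.ShortComplex

open ShortComplex ZeroObject

variable {D : Type*} [Category D] [Abelian D] {X : Set D}

namespace IsResolving

lemma zero_mem_s13 (hX : IsResolving X) : (0 : D) ∈ X :=
  hX.projective_mem _ inferInstance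

lemma mem_of_iso_s13 (hX : IsResolving X) {M N : D} (e : M ≅ N) (hM : M ∈ X) : N ∈ X :=
  hX.ext_closed (ShortComplex.mk (0 : 0 ⟶ N) e.inv zero_comp)
    (Splitting.ofIsZeroOfIsIso _ (isZero_zero D) (by dsimp; infer_instance)).shortExact
    hX.zero_mem_s13 hM

lemma biprod_mem (hX : IsResolving X) {M N : D} (hM : M ∈ X) (hN : N ∈ X) : (M ⊞ N) ∈ X :=
  hX.ext_closed _ (Splitting.ofHasBinaryBiproduct M N).shortExact hM hN

lemma kernel_mem (hX : IsResolving X) {M N : D} (g : M ⟶ N) [Epi g] (hM : M ∈ X) (hN : N ∈ X) :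
    kernel g ∈ X :=
  hX.ker_epi_closed _ (shortExact_kernel g) hM hN

end IsResolving

namespace ResLE

lemma of_iso {M M' : D} {n : ℕ} (h : ResLE X M n) (e : M ≅ M') : ResLE X M' n := by
  cases h with
  | zero e₀ h₀ => exact .zero (e₀ ≪≫ e) h₀
  | succ f g w hS hX₀ hK =>
    exact .succ f (g ≫ e.hom) _ (hS.comp_iso_X₃ e) hX₀ hK

lemma zero_iff (hX : IsResolving X) {M : D} : ResLE X M 0 ↔ M ∈ X :=
  ⟨fun | .zero e h => hX.mem_of_iso_s13 e h, fun h => .zero (Iso.refl M) h⟩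

lemma succ_of_kernel {M G : D} {n : ℕ} (g : G ⟶ M) [Epi g] (hG : G ∈ X)
    (h : ResLE X (kernel g) n) : ResLE X M (n + 1) :=
  .succ _ g (kernel.condition g) (shortExact_kernel g) hG h

lemma le_succ (hX : IsResolving X) {M : D} {n : ℕ} (h : ResLE X M n) : ResLE X M (n + 1) := by
  induction h with
  | zero e h₀ =>
    refine .succ (0 : (0 : D) ⟶ _) e.hom zero_comp ?_ h₀ ((zero_iff hX).2 hX.zero_mem_s13)
    exact (Splitting.ofIsZeroOfIsIso _ (isZero_zero D) (by dsimp; infer_instance)).shortExact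
  | succ f g w hS h₀ _ ih => exact .succ f g w hS h₀ ih

lemma of_le (hX : IsResolving X) {M : D} {n n' : ℕ} (h : ResLE X M n) (hle : n ≤ n') :
    ResLE X M n' := by
  induction hle with
  | refl => exact h
  | step _ ih => exact ih.le_succ hX

lemma exists_epi_resLE_kernel (hX : IsResolving X) {M : D} {n : ℕ} (h : ResLE X M n) :
    ∃ (G : D) (u : G ⟶ M), Epi u ∧ G ∈ X ∧ ResLE X (kernel u) (n - 1) := by
  cases h with
  | zero e h₀ =>
    exact ⟨_, e.hom, inferInstance, h₀,
      (zero_iff hX).2 (hX.mem_of_iso_s13 (kernel.ofMono e.hom).symm hX.zero_mem_s13)⟩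
  | succ f g w hS h₀ hK =>
    have := hS.epi_g
    exact ⟨_, g, inferInstance, h₀, hK.of_iso hS.isoKernel⟩

end ResLE

namespace IsResolving

variable (hX : IsResolving X) {S : ShortComplex D}
include hX

lemma resLE_X₁_of_X₃_mem (hS : S.ShortExact) {n : ℕ} (h₂ : ResLE X S.X₂ n) (h₃ : S.X₃ ∈ X) :
    ResLE X S.X₁ n := by
  have := hS.epi_g
  cases n with
  | zero =>
    exact (ResLE.zero_iff hX).2 (hX.ker_epi_closed S hS ((ResLE.zero_iff hX).1 h₂) h₃)
  | succ n =>
    obtain ⟨G, u, _, hG, hu⟩ := h₂.exists_epi_resLE_kernel hX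
    have hug : kernel (u ≫ S.g) ∈ X := hX.kernel_mem _ hG h₃
    exact (ResLE.succ _ _ _ (shortExact_kernel_comp u S.g) hug hu).of_iso hS.isoKernel.symm

variable [EnoughProjectives D]

lemma resLE_X₂_of_X₃_mem (hS : S.ShortExact) {n : ℕ} (h₁ : ResLE X S.X₁ n) (h₃ : S.X₃ ∈ X) :
    ResLE X S.X₂ n := by
  induction n generalizing S with
  | zero =>
    exact (ResLE.zero_iff hX).2 (hX.ext_closed S hS ((ResLE.zero_iff hX).1 h₁) h₃)
  | succ n ih =>
    obtain ⟨G, u, _, hG, hu⟩ := h₁.exists_epi_resLE_kernel hX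
    obtain ⟨m, _, _, _, _, hT⟩ := hS.exists_horseshoe u
    have hP : Projective.over S.X₃ ∈ X := hX.projective_mem _ inferInstance
    exact ResLE.succ_of_kernel m (hX.biprod_mem hG hP)
      (ih hT hu (hX.kernel_mem _ hP h₃))

lemma resLE_X₁_of_X₂_mem (hS : S.ShortExact) {n : ℕ} (h₂ : S.X₂ ∈ X) (h₃ : ResLE X S.X₃ n) :
    ResLE X S.X₁ (n - 1) := by
  have := hS.epi_g
  cases h₃ with
  | zero e h₀ =>
    exact (ResLE.zero_iff hX).2 (hX.ker_epi_closed S hS h₂ (hX.mem_of_iso_s13 e h₀))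
  | @succ _ K₀ G₀ n f₀ g₀ w₀ hS₀ hG₀ hK₀ =>
    have := hS₀.epi_g
    -- Schanuel: `ker (g₀, S.g)` is an extension of `S.X₂` by `ker g₀` and, up to swapping the
    -- summands, of `G₀` by `ker S.g`.
    obtain ⟨_, _, _, hT⟩ := exists_shortExact_kernel_biprod_desc g₀ S.g
    obtain ⟨_, _, _, hT'⟩ := exists_shortExact_kernel_biprod_desc S.g g₀
    have hP : ResLE X (kernel (biprod.desc g₀ S.g)) n :=
      hX.resLE_X₂_of_X₃_mem hT (hK₀.of_iso hS₀.isoKernel) h₂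
    have hswap : (biprod.braiding _ _).hom ≫ biprod.desc S.g g₀ = biprod.desc g₀ S.g := by
      ext <;> simp
    have hP' : ResLE X (kernel (biprod.desc S.g g₀)) n :=
      hP.of_iso (kernelIsoOfEq hswap.symm ≪≫ kernelIsIsoComp _ _)
    exact (hX.resLE_X₁_of_X₃_mem hT' hP' hG₀).of_iso hS.isoKernel.symm

lemma resLE_X₂ (hS : S.ShortExact) {p q : ℕ} (h₁ : ResLE X S.X₁ p) (h₃ : ResLE X S.X₃ q) :
    ResLE X S.X₂ (max p q) := by
  induction q generalizing p S with
  | zero => simpa using hX.resLE_X₂_of_X₃_mem hS h₁ ((ResLE.zero_iff hX).1 h₃)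
  | succ q ih =>
    obtain ⟨G, u, _, hG, hu⟩ := h₁.exists_epi_resLE_kernel hX
    obtain ⟨m, _, _, _, _, hT⟩ := hS.exists_horseshoe u
    have hP : Projective.over S.X₃ ∈ X := hX.projective_mem _ inferInstance
    have hker : ResLE X (kernel (Projective.π S.X₃)) q :=
      hX.resLE_X₁_of_X₂_mem (shortExact_kernel (Projective.π S.X₃)) hP h₃
    exact (ResLE.succ_of_kernel m (hX.biprod_mem hG hP) (ih hT hu hker)).of_le hX
      (by omega)

lemma resLE_X₃ (hS : S.ShortExact) {p q : ℕ} (h₁ : ResLE X S.X₁ p) (h₂ : ResLE X S.X₂ q) :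
    ResLE X S.X₃ (max p q + 1) := by
  have := hS.epi_g
  obtain ⟨G, u, _, hG, hu⟩ := h₂.exists_epi_resLE_kernel hX
  have := hX.resLE_X₂ (shortExact_kernel_comp u S.g) hu (h₁.of_iso hS.isoKernel)
  exact (ResLE.succ_of_kernel (u ≫ S.g) hG this).of_le hX (by omega)

end IsResolving

lemma resDim_le_of_resLE {M : D} {n : ℕ} (h : ResLE X M n) : resDim X M ≤ n :=
  sInf_le ⟨n, h, rfl⟩

lemma exists_resLE_of_resDim_ne_top {M : D} (h : resDim X M ≠ ⊤) :
    ∃ n : ℕ, ResLE X M n ∧ resDim X M = n := by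
  have hne : {n : ℕ∞ | ∃ m : ℕ, ResLE X M m ∧ n = m}.Nonempty := by
    by_contra h'
    exact h (by rw [resDim, Set.not_nonempty_iff_eq_empty.1 h', sInf_empty])
  obtain ⟨n, hn, he⟩ := csInf_mem hne
  exact ⟨n, hn, he⟩

lemma resDim_eq_of_iso {M N : D} (e : M ≅ N) : resDim X M = resDim X N := by
  unfold resDim
  congr 1
  ext n
  exact ⟨fun ⟨m, h, hn⟩ => ⟨m, h.of_iso e, hn⟩, fun ⟨m, h, hn⟩ => ⟨m, h.of_iso e.symm, hn⟩⟩

lemma IsResolving.resDim_X₃_le [EnoughProjectives D] (hX : IsResolving X) {S : ShortComplex D}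
    (hS : S.ShortExact) : resDim X S.X₃ ≤ max (resDim X S.X₁) (resDim X S.X₂) + 1 := by
  rcases eq_or_ne (resDim X S.X₁) ⊤ with h₁ | h₁
  · simp [h₁]
  rcases eq_or_ne (resDim X S.X₂) ⊤ with h₂ | h₂
  · simp [h₂]
  obtain ⟨p, hp, e₁⟩ := exists_resLE_of_resDim_ne_top h₁
  obtain ⟨q, hq, e₂⟩ := exists_resLE_of_resDim_ne_top h₂
  rw [e₁, e₂]
  exact_mod_cast resDim_le_of_resLE (hX.resLE_X₃ hS hp hq)

lemma IsResolving.resDim_map_le {C : Type*} [Category C] [Abelian C] [EnoughProjectives D]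
    (hX : IsResolving X) (F : C ⥤ D) [PreservesFiniteLimits F] [PreservesFiniteColimits F]
    {Y : Set C} {M : C} {n : ℕ} (h : ResLE Y M n) :
    resDim X (F.obj M) ≤ n + ⨆ (P : C) (_ : P ∈ Y), resDim X (F.obj P) := by
  set s := ⨆ (P : C) (_ : P ∈ Y), resDim X (F.obj P)
  have hs {P : C} (hP : P ∈ Y) : resDim X (F.obj P) ≤ s :=
    le_biSup (fun P => resDim X (F.obj P)) hP
  induction h with
  | zero e hP => simpa [← resDim_eq_of_iso (X := X) (F.mapIso e)] using hs hP
  | @succ M K P n _ _ _ hS hP _ ih =>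
    calc resDim X (F.obj M)
        ≤ max (resDim X (F.obj K)) (resDim X (F.obj P)) + 1 :=
          hX.resDim_X₃_le (hS.map_of_exact F)
      _ ≤ max (n + s) s + 1 := by gcongr; exact hs hP
      _ = ↑(n + 1) + s := by
          rw [max_eq_left le_add_self]
          push_cast
          ring

theorem resDim_iLower_le_general
    (A : Type u₁) (B : Type u₂) (C : Type u₃)
    [Category.{v₁} A] [Category.{v₂} B] [Category.{v₃} C]
    [Abelian A] [Abelian B] [Abelian C]
    [EnoughProjectives B]
    (R : Recollement A B C)
    (X_A : Set A) (X_B : Set B)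
    (hB : IsResolving X_B) :
    ∀ M : A, resDim X_B (R.iLower.obj M) ≤
      resDim X_A M + ⨆ (P : A) (_ : P ∈ X_A), resDim X_B (R.iLower.obj P) := by
  intro M
  have := R.iLower_preservesFiniteLimits
  have := R.iLower_preservesFiniteColimits
  rcases eq_or_ne (resDim X_A M) ⊤ with hM | hM
  · simp [hM]
  · obtain ⟨n, hn, hM⟩ := exists_resLE_of_resDim_ne_top hM
    rw [hM]
    exact hB.resDim_map_le R.iLower hn

/-- `X_B`-res `i_*(A)` ≤ `X_A`-res `A` + `X_B`-res `i_*(X_A)` : for every object `M` of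
`A`, the `X_B`-resolution dimension of `i_*(M)` is bounded by the `X_A`-resolution
dimension of `M` plus the supremum of `X_B`-resolution dimensions of `i_*(X)`, `X ∈ X_A`. -/
theorem resDim_iLower_le
    (A : Type u₁) (B : Type u₂) (C : Type u₃)
    [Category.{v₁} A] [Category.{v₂} B] [Category.{v₃} C]
    [Abelian A] [Abelian B] [Abelian C]
    [EnoughProjectives A] [EnoughProjectives B] [EnoughProjectives C]
    (R : Recollement A B C)
    (X_A : Set A) (X_B : Set B) (X_C : Set C)
    (hA : IsResolving X_A) (hB : IsResolving X_B) (hC : IsResolving X_C) :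
    ∀ M : A, resDim X_B (R.iLower.obj M) ≤
      resDim X_A M + ⨆ (P : A) (_ : P ∈ X_A), resDim X_B (R.iLower.obj P) :=
  resDim_iLower_le_general A B C R X_A X_B hB
end

section
/- Let (A, B, C) be a recollement of abelian categories with enough projectives. If i* and i^! are both exact, then P(B) = {B ∈ B : i*(B) ∈ P(A) and j*(B) ∈ P(C)}. -/
open CategoryTheory CategoryTheory.Limits

attribute [local instance] Abelian.hasFiniteBiproducts

universe v₁ v₂ v₃ u₁ u₂ u₃

variable {A : Type u₁} [Category.{v₁} A] [Abelian A]

section Aux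

variable {E F : Type*} [Category E] [Category F]

private lemma mono_of_isZero_src' {X Y : E} (h : IsZero X) (f : X ⟶ Y) : Mono f :=
  ⟨fun g g' _ => h.eq_of_tgt g g'⟩

private lemma epi_of_isZero_tgt' {X Y : E} (h : IsZero Y) (f : X ⟶ Y) : Epi f :=
  ⟨fun g g' _ => h.eq_of_src g g'⟩

private lemma homEquiv_zero' [Preadditive E] [Preadditive F]
    {L : E ⥤ F} {G : F ⥤ E} (adj : L ⊣ G) [G.PreservesZeroMorphisms]
    (X : E) (Y : F) : adj.homEquiv X Y 0 = 0 := by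
  rw [Adjunction.homEquiv_unit, Functor.map_zero, comp_zero]

private lemma homEquiv_symm_zero' [Preadditive E] [Preadditive F]
    {L : E ⥤ F} {G : F ⥤ E} (adj : L ⊣ G) [L.PreservesZeroMorphisms]
    (X : E) (Y : F) : (adj.homEquiv X Y).symm 0 = 0 := by
  rw [Adjunction.homEquiv_counit, Functor.map_zero, zero_comp]

end Aux

namespace Recollement

variable {𝒜 : Type u₁} {ℬ : Type u₂} {𝒞 : Type u₃}
    [Category.{v₁} 𝒜] [Category.{v₂} ℬ] [Category.{v₃} 𝒞]
    [Abelian 𝒜] [Abelian ℬ] [Abelian 𝒞] (R : Recollement 𝒜 ℬ 𝒞)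

lemma isZero_jStar_iLower_s16 (a : 𝒜) : IsZero (R.jStar.obj (R.iLower.obj a)) :=
  (R.im_eq_ker _).2 ⟨a, ⟨Iso.refl _⟩⟩

lemma isZero_iStar_jLower_s16 (c : 𝒞) : IsZero (R.iStar.obj (R.jLower.obj c)) := by
  haveI := R.iStar_preservesFiniteColimits
  haveI := R.jLower_preservesFiniteColimits
  haveI := R.iLower_full
  haveI := R.jStar_preservesFiniteLimits
  rw [IsZero.iff_id_eq_zero]
  apply (R.adj₁.homEquiv _ _).injective
  rw [homEquiv_zero']
  apply (R.adj₃.homEquiv _ _).injective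
  rw [homEquiv_zero']
  exact (R.isZero_jStar_iLower_s16 _).eq_of_tgt _ _

lemma isZero_iShriek_jUpper (c : 𝒞) : IsZero (R.iShriek.obj (R.jUpper.obj c)) := by
  haveI := R.iShriek_preservesFiniteLimits
  haveI := R.jUpper_preservesFiniteLimits
  haveI := R.iLower_full
  haveI := R.jStar_preservesFiniteLimits
  rw [IsZero.iff_id_eq_zero]
  apply (R.adj₂.homEquiv _ _).symm.injective
  rw [homEquiv_symm_zero']
  apply (R.adj₄.homEquiv _ _).symm.injective
  rw [homEquiv_symm_zero']
  exact (R.isZero_jStar_iLower_s16 _).eq_of_src _ _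

lemma isZero_of_isZero_iStar_jStar (b : ℬ)
    (h1 : IsZero (R.iStar.obj b)) (h2 : IsZero (R.jStar.obj b)) : IsZero b := by
  haveI := R.iLower_full
  haveI := R.iLower_faithful
  haveI := R.iLower_preservesFiniteLimits
  obtain ⟨a, ⟨e⟩⟩ := (R.im_eq_ker b).1 h2
  have hz : IsZero (R.iStar.obj (R.iLower.obj a)) := h1.of_iso (R.iStar.mapIso e)
  have ha : IsZero a := hz.of_iso (asIso (R.adj₁.counit.app a)).symm
  exact (R.iLower.map_isZero ha).of_iso e.symm

lemma jUpper_preservesEpimorphisms (hi' : PreservesFiniteColimits R.iShriek) :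
    R.jUpper.PreservesEpimorphisms := by
  constructor
  intro X Y f hf
  haveI := hf
  haveI := R.jStar_preservesFiniteColimits
  haveI := R.jStar_preservesFiniteLimits
  haveI := R.jUpper_preservesFiniteLimits
  haveI := hi'
  haveI := R.jUpper_full
  haveI := R.jUpper_faithful
  haveI := R.iLower_full
  haveI := R.iLower_faithful
  haveI := R.iLower_preservesFiniteLimits
  set g := R.jUpper.map f with hg
  apply Preadditive.epi_of_isZero_cokernel
  have h2 : IsZero (R.jStar.obj (cokernel g)) := by
    haveI : Epi (R.jStar.map g) := by
      have heq : R.jStar.map g =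
          R.adj₄.counit.app X ≫ f ≫ inv (R.adj₄.counit.app Y) := by
        rw [← Category.assoc, IsIso.eq_comp_inv, hg]
        simp
      rw [heq]
      infer_instance
    have hz : IsZero (cokernel (R.jStar.map g)) :=
      (isZero_zero _).of_iso (cokernel.ofEpi (R.jStar.map g))
    exact hz.of_iso (PreservesCokernel.iso R.jStar g)
  have h3 : IsZero (R.iShriek.obj (cokernel g)) := by
    have hz : IsZero (cokernel (R.iShriek.map g)) :=
      IsZero.of_epi (cokernel.π (R.iShriek.map g)) (R.isZero_iShriek_jUpper Y)
    exact hz.of_iso (PreservesCokernel.iso R.iShriek g)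
  obtain ⟨a, ⟨e⟩⟩ := (R.im_eq_ker _).1 h2
  have ha : IsZero a :=
    h3.of_iso ((asIso (R.adj₂.unit.app a)) ≪≫ R.iShriek.mapIso e)
  exact (R.iLower.map_isZero ha).of_iso e.symm

end Recollement

/-- If `i*` and `i^!` are both exact, then
`P(B) = {B | i*(B) ∈ P(A) and j*(B) ∈ P(C)}`. -/
theorem projectives_eq_glued
    (A : Type u₁) (B : Type u₂) (C : Type u₃)
    [Category.{v₁} A] [Category.{v₂} B] [Category.{v₃} C]
    [Abelian A] [Abelian B] [Abelian C]
    [EnoughProjectives A] [EnoughProjectives B] [EnoughProjectives C]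
    (R : Recollement A B C)
    (hi : PreservesFiniteLimits R.iStar)
    (hi' : PreservesFiniteColimits R.iShriek) :
    {b : B | Projective b} =
      {b : B | Projective (R.iStar.obj b) ∧ Projective (R.jStar.obj b)} := by
  haveI := R.iLower_preservesFiniteLimits
  haveI := R.iLower_preservesFiniteColimits
  haveI := R.jStar_preservesFiniteLimits
  haveI := R.jStar_preservesFiniteColimits
  haveI := R.iStar_preservesFiniteColimits
  haveI := R.iShriek_preservesFiniteLimits
  haveI := R.jLower_preservesFiniteColimits
  haveI := R.jUpper_preservesFiniteLimits
  haveI := R.iLower_full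
  haveI := R.iLower_faithful
  haveI := R.jLower_full
  haveI := R.jLower_faithful
  haveI := R.jUpper_full
  haveI := R.jUpper_faithful
  haveI := hi
  haveI := hi'
  haveI := R.jUpper_preservesEpimorphisms hi'
  ext b
  simp only [Set.mem_setOf_eq]
  constructor
  · intro hb
    exact ⟨R.adj₁.map_projective b hb, R.adj₄.map_projective b hb⟩
  · rintro ⟨h1, h2⟩
    -- the canonical short exact sequence `0 → j_! j* b → b → i_* i* b → 0`
    set ε : R.jLower.obj (R.jStar.obj b) ⟶ b := R.adj₃.counit.app b with hε
    set η : b ⟶ R.iLower.obj (R.iStar.obj b) := R.adj₁.unit.app b with hη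
    have w : ε ≫ η = 0 := by
      apply (R.adj₃.homEquiv _ _).injective
      rw [homEquiv_zero']
      exact (R.isZero_jStar_iLower_s16 _).eq_of_tgt _ _
    set S : ShortComplex B := ShortComplex.mk ε η w with hS
    -- `i* ε` has zero source, `i* η` is an isomorphism
    have hiε : IsZero (R.iStar.obj (R.jLower.obj (R.jStar.obj b))) :=
      R.isZero_iStar_jLower_s16 _
    have hiη : IsIso (R.iStar.map η) := by
      have h' : inv (R.adj₁.counit.app (R.iStar.obj b)) = R.iStar.map η :=
        IsIso.inv_eq_of_inv_hom_id (R.adj₁.left_triangle_components b)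
      rw [← h']
      infer_instance
    -- `j* ε` is an isomorphism, `j* η` has zero target
    have hjε : IsIso (R.jStar.map ε) := by
      have h' : inv (R.adj₃.unit.app (R.jStar.obj b)) = R.jStar.map ε :=
        IsIso.inv_eq_of_hom_inv_id (R.adj₃.right_triangle_components b)
      rw [← h']
      infer_instance
    have hjη : IsZero (R.jStar.obj (R.iLower.obj (R.iStar.obj b))) :=
      R.isZero_jStar_iLower_s16 _
    -- mono, epi, exact
    haveI hmono : Mono S.f := by
      apply Preadditive.mono_of_isZero_kernel
      apply R.isZero_of_isZero_iStar_jStar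
      · haveI : Mono (R.iStar.map S.f) := mono_of_isZero_src' hiε _
        have hz : IsZero (kernel (R.iStar.map S.f)) :=
          (isZero_zero _).of_iso (kernel.ofMono (R.iStar.map S.f))
        exact hz.of_iso (PreservesKernel.iso R.iStar S.f)
      · haveI : Mono (R.jStar.map S.f) := by
          haveI := hjε; exact inferInstance
        have hz : IsZero (kernel (R.jStar.map S.f)) :=
          (isZero_zero _).of_iso (kernel.ofMono (R.jStar.map S.f))
        exact hz.of_iso (PreservesKernel.iso R.jStar S.f)
    haveI hepi : Epi S.g := by
      apply Preadditive.epi_of_isZero_cokernel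
      apply R.isZero_of_isZero_iStar_jStar
      · haveI : Epi (R.iStar.map S.g) := by
          haveI := hiη; exact inferInstance
        have hz : IsZero (cokernel (R.iStar.map S.g)) :=
          (isZero_zero _).of_iso (cokernel.ofEpi (R.iStar.map S.g))
        exact hz.of_iso (PreservesCokernel.iso R.iStar S.g)
      · haveI : Epi (R.jStar.map S.g) := epi_of_isZero_tgt' hjη _
        have hz : IsZero (cokernel (R.jStar.map S.g)) :=
          (isZero_zero _).of_iso (cokernel.ofEpi (R.jStar.map S.g))
        exact hz.of_iso (PreservesCokernel.iso R.jStar S.g)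
    have hex : S.Exact := by
      rw [ShortComplex.exact_iff_isZero_homology]
      apply R.isZero_of_isZero_iStar_jStar
      · have hex' : (S.map R.iStar).Exact :=
          (ShortComplex.Splitting.ofIsZeroOfIsIso (S.map R.iStar) hiε hiη).exact
        rw [ShortComplex.exact_iff_isZero_homology] at hex'
        exact hex'.of_iso (S.mapHomologyIso R.iStar).symm
      · have hex' : (S.map R.jStar).Exact :=
          (ShortComplex.Splitting.ofIsIsoOfIsZero (S.map R.jStar) hjε hjη).exact
        rw [ShortComplex.exact_iff_isZero_homology] at hex'
        exact hex'.of_iso (S.mapHomologyIso R.jStar).symm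
    have hse : S.ShortExact := ⟨hex⟩
    -- both ends are projective, so the sequence splits
    haveI hp1 : Projective S.X₁ := R.adj₃.map_projective _ h2
    haveI hp3 : Projective S.X₃ := R.adj₂.map_projective _ h1
    have sp := hse.splittingOfProjective
    exact Projective.of_iso sp.isoBinaryBiproduct.symm inferInstance
end

section
/- Let (A, B, C) be a recollement of abelian categories and X any full additive subcategory of B. Then: (1) if i* is exact, then (i*(X))-res A ≤ X-res B; (2) (j*(X))-res C ≤ X-res B. -/
open CategoryTheory CategoryTheory.Limits

attribute [local instance] Abelian.hasFiniteBiproducts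

universe v₁ v₂ v₃ u₁ u₂ u₃

variable {A : Type u₁} [Category.{v₁} A] [Abelian A]

lemma ResLE.of_iso_s18 {X : Set A} {M M' : A} {n : ℕ} (h : ResLE X M n) (e : M ≅ M') :
    ResLE X M' n := by
  cases h with
  | zero e' hX => exact .zero (e' ≪≫ e) hX
  | succ f g w hse hX hK =>
    refine .succ f (g ≫ e.hom) (by rw [← Category.assoc, w, zero_comp]) ?_ hX hK
    exact ShortComplex.shortExact_of_iso
      (ShortComplex.isoMk (S₁ := ShortComplex.mk f g w) (Iso.refl _) (Iso.refl _) e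
        (by simp) (by simp)) hse

lemma ResLE.map {B : Type u₂} [Category.{v₂} B] [Abelian B] {X : Set A} {M : A} {n : ℕ}
    (h : ResLE X M n) (F : A ⥤ B) [PreservesFiniteLimits F] [PreservesFiniteColimits F] :
    ResLE (F.obj '' X) (F.obj M) n := by
  induction h with
  | zero e hX => exact .zero (F.mapIso e) ⟨_, hX, rfl⟩
  | succ f g w hse hX hK ih =>
    exact .succ (F.map f) (F.map g) (by rw [← F.map_comp, w, F.map_zero])
      (hse.map_of_exact F) ⟨_, hX, rfl⟩ ih

lemma resDimCat_image_le_aux {A : Type u₁} {B : Type u₂}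
    [Category.{v₁} A] [Category.{v₂} B] [Abelian A] [Abelian B]
    (F : B ⥤ A) (G : A ⥤ B) (adj : F ⊣ G) [G.Full] [G.Faithful]
    [PreservesFiniteLimits F] [PreservesFiniteColimits F] (X : Set B) :
    resDimCat (F.obj '' X) ≤ resDimCat X := by
  apply iSup_le; intro M
  refine le_trans ?_ (le_iSup _ (G.obj M))
  apply sInf_le_sInf
  rintro n ⟨m, h, rfl⟩
  exact ⟨m, (h.map F).of_iso_s18 (asIso (adj.counit.app M)), rfl⟩

/-- For any full additive subcategory `X` of `B`:
(1) if `i*` is exact then `(i*(X))`-res `A` ≤ `X`-res `B`;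
(2) `(j*(X))`-res `C` ≤ `X`-res `B`. -/
theorem resDimCat_image_le
    (A : Type u₁) (B : Type u₂) (C : Type u₃)
    [Category.{v₁} A] [Category.{v₂} B] [Category.{v₃} C]
    [Abelian A] [Abelian B] [Abelian C]
    (R : Recollement A B C) (X : Set B) :
    (PreservesFiniteLimits R.iStar → resDimCat (R.iStar.obj '' X) ≤ resDimCat X) ∧
    resDimCat (R.jStar.obj '' X) ≤ resDimCat X := by
  constructor
  · intro hi
    haveI := hi
    haveI := R.iStar_preservesFiniteColimits
    haveI := R.iLower_full
    haveI := R.iLower_faithful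
    exact resDimCat_image_le_aux R.iStar R.iLower R.adj₁ X
  · haveI := R.jStar_preservesFiniteLimits
    haveI := R.jStar_preservesFiniteColimits
    haveI := R.jUpper_full
    haveI := R.jUpper_faithful
    exact resDimCat_image_le_aux R.jStar R.jUpper R.adj₄ X
end
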